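/- Let R be a commutative ring that is also a ℚ-algebra, n ≥ 0, and A an n × n matrix with entries in R. Then in the formal power series ring R[[q]] one has det(1ₙ − q·A) = exp( − ∑_{k ≥ 1} (tr(A^k)/k) · q^k ), where det(1ₙ − q·A) is the determinant of the n × n matrix over R[[q]] whose (i,j) entry is δ_{ij} − q·A_{ij}, tr denotes the matrix trace, and exp is the formal power-series exponential. -/

import Mathlib

/-- The formal power-series exponential `exp F = ∑_{j ≥ 0} F^j / j!` of a power series `F`
with zero constant term over a `ℚ`-algebra: for such `F`, the coefficient of `q^k` in `F^j`
vanishes for `j > k`, so the coefficient of `q^k` in `exp F` is the (finite) sum below. -/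
noncomputable def PowerSeries.expOf {R : Type*} [CommRing R] [Algebra ℚ R]
    (F : PowerSeries R) : PowerSeries R :=
  PowerSeries.mk fun k =>
    ∑ j ∈ Finset.range (k + 1), ((j.factorial : ℚ)⁻¹) • (PowerSeries.coeff (R := R) k (F ^ j))

section Aux

set_option linter.unusedSectionVars false

open PowerSeries Finset

variable {R : Type*} [CommRing R] [Algebra ℚ R] {n : ℕ}

lemma dX_prod {ι : Type*} [DecidableEq ι] (s : Finset ι) (f : ι → R⟦X⟧) :
    d⁄dX R (∏ i ∈ s, f i) = ∑ i ∈ s, (∏ j ∈ s.erase i, f j) * d⁄dX R (f i) := by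
  classical
  induction s using Finset.induction_on with
  | empty => simp
  | insert a s hx ih =>
    rw [Finset.prod_insert hx, Derivation.leibniz, smul_eq_mul, smul_eq_mul, ih,
      Finset.sum_insert hx, Finset.erase_insert hx, Finset.mul_sum, add_comm]
    congr 1
    apply Finset.sum_congr rfl
    intro i hi
    rw [Finset.erase_insert_of_ne (by rintro rfl; exact hx hi), Finset.prod_insert
      (by simp only [Finset.mem_erase]; rintro ⟨-, h⟩; exact hx h), mul_assoc]

lemma dX_det {m : ℕ} (M : Matrix (Fin m) (Fin m) R⟦X⟧) :
    d⁄dX R M.det = ∑ i, (M.updateCol i fun k => d⁄dX R (M k i)).det := by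
  classical
  rw [Matrix.det_apply, map_sum]
  simp_rw [Derivation.map_smul_of_tower, dX_prod, Finset.smul_sum]
  rw [Finset.sum_comm]
  apply Finset.sum_congr rfl
  intro i _
  rw [Matrix.det_apply]
  apply Finset.sum_congr rfl
  intro σ _
  congr 1
  rw [← Finset.mul_prod_erase Finset.univ _ (Finset.mem_univ i)]
  rw [Matrix.updateCol_apply, if_pos rfl, mul_comm]
  congr 1
  apply Finset.prod_congr rfl
  intro j hj
  rw [Matrix.updateCol_apply, if_neg (Finset.mem_erase.mp hj).1]


/-- geometric series matrix -/
noncomputable def Gm (A : Matrix (Fin n) (Fin n) R) : Matrix (Fin n) (Fin n) R⟦X⟧ :=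
  Matrix.of fun i j => mk fun k => (A ^ k) i j

lemma BG_eq_one (A : Matrix (Fin n) (Fin n) R) :
    ((1 : Matrix (Fin n) (Fin n) R⟦X⟧) - (X : R⟦X⟧) • A.map (C (R := R))) * Gm A = 1 := by
  classical
  ext i j k
  rw [Matrix.mul_apply, map_sum]
  simp only [Matrix.sub_apply, Matrix.smul_apply, Matrix.map_apply, smul_eq_mul, sub_mul,
    map_sub, Gm, Matrix.of_apply, Matrix.one_apply, ite_mul, one_mul, zero_mul, mul_assoc]
  simp only [apply_ite (coeff (R := R) k), map_zero]
  rw [Finset.sum_sub_distrib, Finset.sum_ite_eq (Finset.univ : Finset (Fin n)) i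
    (fun l => (coeff (R := R) k) (mk fun k => (A ^ k) l j))]
  simp only [Finset.mem_univ, if_pos, coeff_mk]
  cases k with
  | zero =>
    simp only [coeff_zero_X_mul, Finset.sum_const_zero, sub_zero, pow_zero,
      coeff_zero_eq_constantCoeff, map_one, Matrix.one_apply]
  | succ k =>
    simp only [coeff_succ_X_mul, coeff_C_mul, coeff_mk, coeff_one, Nat.succ_ne_zero, if_false,
      ite_self]
    rw [sub_eq_zero, pow_succ', Matrix.mul_apply]

lemma dX_det_B (A : Matrix (Fin n) (Fin n) R) :
    d⁄dX R (Matrix.det ((1 : Matrix (Fin n) (Fin n) R⟦X⟧) - (X : R⟦X⟧) • A.map (C (R := R)))) =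
      -(mk fun k => Matrix.trace (A ^ (k + 1))) *
        Matrix.det ((1 : Matrix (Fin n) (Fin n) R⟦X⟧) - (X : R⟦X⟧) • A.map (C (R := R))) := by
  classical
  set B : Matrix (Fin n) (Fin n) R⟦X⟧ := 1 - (X : R⟦X⟧) • A.map (C (R := R)) with hB
  have hDB : ∀ k i, d⁄dX R (B k i) = -(C (R := R) (A k i)) := by
    intro k i
    have h1 : B k i = C (R := R) ((1 : Matrix (Fin n) (Fin n) R) k i) - X * C (R := R) (A k i) := by
      simp [hB, Matrix.one_apply, apply_ite (C (R := R))]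
    rw [h1, map_sub, derivative_C, Derivation.leibniz, derivative_C, derivative_X,
      smul_zero, smul_eq_mul, mul_one, zero_add, zero_sub]
  have hadj : Matrix.adjugate B = B.det • Gm A := by
    calc Matrix.adjugate B = Matrix.adjugate B * (B * Gm A) := by rw [BG_eq_one A, mul_one]
    _ = (Matrix.adjugate B * B) * Gm A := by rw [mul_assoc]
    _ = B.det • Gm A := by rw [Matrix.adjugate_mul, Matrix.smul_mul, one_mul]
  rw [dX_det]
  have key : ∀ i, (B.updateCol i fun k => d⁄dX R (B k i)).det =
      -(B.det * ((Gm A * A.map (C (R := R))) i i)) := by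
    intro i
    rw [show (fun k => d⁄dX R (B k i)) = fun k => -(C (R := R) (A k i)) from funext fun k => hDB k i]
    rw [← Matrix.cramer_apply, Matrix.cramer_eq_adjugate_mulVec, hadj]
    simp only [Matrix.mulVec, dotProduct, Matrix.smul_apply, smul_eq_mul, mul_neg,
      Matrix.mul_apply, Finset.mul_sum]
    rw [← Finset.sum_neg_distrib]
    apply Finset.sum_congr rfl
    intro l _
    rw [Matrix.map_apply]
    ring
  simp only [key]
  rw [Finset.sum_neg_distrib, ← Finset.mul_sum, neg_mul, mul_comm]
  congr 2
  -- trace computation : ∑ i, (Gm A * A.map C) i i = mk fun k => trace (A ^ (k+1))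
  apply PowerSeries.ext; intro k
  rw [map_sum]
  simp only [Matrix.mul_apply, Gm, Matrix.of_apply, Matrix.map_apply, map_sum, coeff_mk]
  simp only [coeff_mul_C, coeff_mk]
  rw [Matrix.trace, pow_succ]
  apply Finset.sum_congr rfl
  intro i _
  rw [Matrix.diag_apply, Matrix.mul_apply]


section Exp
open PowerSeries Finset



lemma coeff_pow_eq_zero {F : R⟦X⟧} (hF : constantCoeff (R := R) F = 0) {i j : ℕ} (hij : i < j) :
    coeff (R := R) i (F ^ j) = 0 := by
  obtain ⟨g, rfl⟩ := PowerSeries.X_dvd_iff.mpr hF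
  rw [mul_pow, coeff_X_pow_mul', if_neg (by omega)]

/-- partial sums agree with expOf in low degrees -/
lemma coeff_expOf_eq {F : R⟦X⟧} (hF : constantCoeff (R := R) F = 0) {i m : ℕ} (him : i ≤ m) :
    coeff (R := R) i (PowerSeries.expOf F) =
      coeff (R := R) i (∑ j ∈ Finset.range (m + 1), ((j.factorial : ℚ)⁻¹) • F ^ j) := by
  rw [map_sum, PowerSeries.expOf, coeff_mk]
  simp only [PowerSeries.coeff_smul]
  rw [← Finset.sum_range_add_sum_Ico _ (by omega : i + 1 ≤ m + 1)]
  rw [left_eq_add]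
  apply Finset.sum_eq_zero
  intro j hj
  rw [coeff_pow_eq_zero hF (by exact (Finset.mem_Ico.mp hj).1), smul_zero]

lemma coeff_zero_expOf (F : R⟦X⟧) : coeff (R := R) 0 (PowerSeries.expOf F) = 1 := by
  rw [PowerSeries.expOf, coeff_mk]
  simp

lemma dX_qsmul (q : ℚ) (f : R⟦X⟧) : d⁄dX R (q • f) = q • d⁄dX R f := by
  apply PowerSeries.ext; intro k
  rw [coeff_derivative, PowerSeries.coeff_smul, PowerSeries.coeff_smul, coeff_derivative,
    smul_mul_assoc]

lemma dX_partial (F : R⟦X⟧) (m : ℕ) :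
    d⁄dX R (∑ j ∈ Finset.range (m + 1 + 1), ((j.factorial : ℚ)⁻¹) • F ^ j) =
      (∑ j ∈ Finset.range (m + 1), ((j.factorial : ℚ)⁻¹) • F ^ j) * d⁄dX R F := by
  rw [map_sum]
  simp only [dX_qsmul]
  rw [Finset.sum_range_succ' _ (m + 1)]
  simp only [pow_zero, Derivation.map_one_eq_zero, smul_zero, add_zero]
  rw [Finset.sum_mul]
  apply Finset.sum_congr rfl
  intro j hj
  rw [Derivation.leibniz_pow]
  simp only [Nat.add_sub_cancel, smul_eq_mul]
  rw [← Nat.cast_smul_eq_nsmul ℚ (j + 1) (F ^ j * d⁄dX R F), smul_smul, smul_mul_assoc]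
  congr 1
  rw [Nat.factorial_succ]
  push_cast
  rw [mul_inv, mul_comm ((j : ℚ) + 1)⁻¹, mul_assoc, inv_mul_cancel₀ (by positivity), mul_one]

lemma dX_expOf {F : R⟦X⟧} (hF : constantCoeff (R := R) F = 0) :
    d⁄dX R (PowerSeries.expOf F) = d⁄dX R F * PowerSeries.expOf F := by
  apply PowerSeries.ext; intro k
  rw [coeff_derivative, coeff_expOf_eq hF (le_refl (k+1)), ← coeff_derivative, dX_partial]
  rw [mul_comm (d⁄dX R F), coeff_mul, coeff_mul]
  apply Finset.sum_congr rfl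
  intro p hp
  rw [coeff_expOf_eq hF (show p.1 ≤ k from by
    have := Finset.HasAntidiagonal.mem_antidiagonal.mp hp; omega)]

end Exp
section Uniq
variable {R : Type*} [CommRing R] [Algebra ℚ R]

lemma ode_unique {h f g : R⟦X⟧} (hf : d⁄dX R f = h * f) (hg : d⁄dX R g = h * g)
    (h0 : coeff (R := R) 0 f = coeff (R := R) 0 g) : f = g := by
  apply PowerSeries.ext
  intro k
  induction k using Nat.strong_induction_on with
  | _ k ih =>
    match k with
    | 0 => exact h0
    | (k+1) =>
      have hu : IsUnit ((k : R) + 1) := by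
        have h2 : ((k : R) + 1) = algebraMap ℚ R ((k : ℚ) + 1) := by
          rw [map_add, map_natCast, map_one]
        rw [h2]
        exact (isUnit_iff_ne_zero.mpr (by positivity)).map _
      have e1 : coeff (R := R) (k+1) f * ((k : R) + 1) = coeff (R := R) (k+1) g * ((k : R) + 1) := by
        have c1 := coeff_derivative f k
        have c2 := coeff_derivative g k
        push_cast at c1 c2
        rw [← c1, ← c2, hf, hg, coeff_mul, coeff_mul]
        apply Finset.sum_congr rfl
        intro p hp
        congr 1
        exact ih p.2 (by have := Finset.HasAntidiagonal.mem_antidiagonal.mp hp; omega)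
      exact hu.mul_right_cancel e1

end Uniq
end Aux

open PowerSeries Finset in
theorem det_one_sub_smul_eq_exp_neg_sum_trace
    {R : Type*} [CommRing R] [Algebra ℚ R] (n : ℕ) (A : Matrix (Fin n) (Fin n) R) :
    Matrix.det ((1 : Matrix (Fin n) (Fin n) (PowerSeries R)) -
        (PowerSeries.X : PowerSeries R) • A.map (PowerSeries.C (R := R))) =
      PowerSeries.expOf
        (PowerSeries.mk fun k =>
          if k = 0 then 0 else -(((k : ℚ)⁻¹) • Matrix.trace (A ^ k))) := by
  classical
  set F : PowerSeries R := PowerSeries.mk fun k =>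
    if k = 0 then 0 else -(((k : ℚ)⁻¹) • Matrix.trace (A ^ k)) with hFdef
  have hF0 : PowerSeries.constantCoeff (R := R) F = 0 := by
    rw [← PowerSeries.coeff_zero_eq_constantCoeff, hFdef, PowerSeries.coeff_mk, if_pos rfl]
  have hDF : d⁄dX R F = -(PowerSeries.mk fun k => Matrix.trace (A ^ (k + 1))) := by
    apply PowerSeries.ext; intro k
    rw [PowerSeries.coeff_derivative, hFdef, PowerSeries.coeff_mk,
      if_neg (Nat.succ_ne_zero k), map_neg, PowerSeries.coeff_mk, neg_mul, neg_inj,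
      Algebra.smul_def, mul_assoc, mul_comm (Matrix.trace (A ^ (k + 1)))]
    have h2 : ((k : R) + 1) = algebraMap ℚ R (((k : ℚ)) + 1) := by
      rw [map_add, map_natCast, map_one]
    push_cast
    rw [h2, ← mul_assoc, ← map_mul, inv_mul_cancel₀ (by positivity), map_one, one_mul]
  have hg : d⁄dX R (PowerSeries.expOf F) =
      -(PowerSeries.mk fun k => Matrix.trace (A ^ (k + 1))) * PowerSeries.expOf F := by
    rw [← hDF]; exact dX_expOf hF0
  have h0 : PowerSeries.coeff (R := R) 0
      (Matrix.det ((1 : Matrix (Fin n) (Fin n) (PowerSeries R)) -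
        (PowerSeries.X : PowerSeries R) • A.map (PowerSeries.C (R := R)))) =
      PowerSeries.coeff (R := R) 0 (PowerSeries.expOf F) := by
    rw [coeff_zero_expOf, PowerSeries.coeff_zero_eq_constantCoeff, RingHom.map_det]
    have hB1 : ((1 : Matrix (Fin n) (Fin n) (PowerSeries R)) -
        (PowerSeries.X : PowerSeries R) • A.map (PowerSeries.C (R := R))).map
          (PowerSeries.constantCoeff (R := R)) = 1 := by
      ext i j
      simp only [Matrix.map_apply, Matrix.sub_apply, Matrix.smul_apply, Matrix.map_apply,
        smul_eq_mul, map_sub, map_mul, PowerSeries.constantCoeff_X, zero_mul, sub_zero,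
        PowerSeries.constantCoeff_C]
      rw [Matrix.one_apply, Matrix.one_apply]
      split <;> simp
    rw [RingHom.mapMatrix_apply, hB1, Matrix.det_one]
  exact ode_unique (dX_det_B A) hg h0
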